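/- arXiv:2208.14299 — 2 statements merged into one kernel-verified Lean document; each statement's English description precedes it below -/
import Mathlib

section
/- The restriction of φ₀ to the open set Ω₀ is real-valued and locally semi-convex: for every x̄ ∈ Ω₀ there exist ρ > 0 and C > 0 such that x ↦ φ₀(x) + (C/2)|x|² is convex on B_ρ(x̄). In particular, φ₀ is locally Lipschitz, hence continuous, on Ω₀. -/
noncomputable section

open scoped Classical RealInnerProductSpace

/-- The backward `𝕃`-transform `φ₁^{←𝕃}(x) = sup_{y ∈ B_R(x)} (φ₁(y) − 𝕃(y−x))`. -/
def bwTransform {d : ℕ} (R : ℝ) (Lfun φ₁ : EuclideanSpace ℝ (Fin d) → EReal)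
    (x : EuclideanSpace ℝ (Fin d)) : EReal :=
  ⨆ y ∈ Metric.ball x R, φ₁ y - Lfun (y - x)

/-- `Ext_R(S)`: the union of all open balls of radius `R` whose center has
distance `> R` from `S`. -/
def extR {d : ℕ} (R : ℝ) (S : Set (EuclideanSpace ℝ (Fin d))) :
    Set (EuclideanSpace ℝ (Fin d)) :=
  ⋃ (x) (_ : ENNReal.ofReal R < EMetric.infEdist x S), Metric.ball x R

/-!
Near `xbar` only the points `y` of a fixed compact set `Y`, all at distance `< R` from every `x`
close to `xbar` and with `φ₁ y` finite, contribute to the supremum defining `φ₀ x`: `φ₁` is bounded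
above near `B_R(xbar)` (it is upper semicontinuous, and finite there because `φ₀` is finite near
`xbar`), `φ₀` is bounded below near `xbar` (it is lower semicontinuous), and `𝕃` exceeds any bound
near the sphere of radius `R`. So locally `φ₀ x = sup_{y ∈ Y} (φ₁ y - L (y - x))`, a supremum of
functions that are uniformly Lipschitz and uniformly semiconvex since `L` is `C²` on a compact ball
inside `B_R(0)`; both properties pass to the supremum.
-/

open Set Metric

section Semiconvexity

variable {E : Type*} [NormedAddCommGroup E] [NormedSpace ℝ E] {s t : Set E} {ι : Type*}

lemma UniformConvexOn.ciSup [Nonempty ι] {φ : ℝ → ℝ} {f : ι → E → ℝ}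
    (hf : ∀ i, UniformConvexOn s φ (f i)) (hbdd : ∀ x ∈ s, BddAbove (range fun i ↦ f i x)) :
    UniformConvexOn s φ fun x ↦ ⨆ i, f i x := by
  refine ⟨(hf (Classical.arbitrary ι)).1, fun x hx y hy a b ha hb hab ↦ ciSup_le fun i ↦ ?_⟩
  calc f i (a • x + b • y) ≤ a • f i x + b • f i y - a * b * φ ‖x - y‖ := (hf i).2 hx hy ha hb hab
    _ ≤ a • (⨆ i, f i x) + b • (⨆ i, f i y) - a * b * φ ‖x - y‖ := by
      gcongr
      exacts [le_ciSup (hbdd x hx) i, le_ciSup (hbdd y hy) i]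

lemma LipschitzOnWith.ciSup {α : Type*} [PseudoMetricSpace α] {s : Set α} [Nonempty ι]
    {K : NNReal} {f : ι → α → ℝ} (hf : ∀ i, LipschitzOnWith K (f i) s)
    (hbdd : ∀ x ∈ s, BddAbove (range fun i ↦ f i x)) :
    LipschitzOnWith K (fun x ↦ ⨆ i, f i x) s :=
  LipschitzOnWith.of_le_add_mul K fun x hx y hy ↦ ciSup_le fun i ↦
    ((hf i).le_add_mul hx hy).trans (by gcongr; exact le_ciSup (hbdd y hy) i)

lemma Convex.norm_image_sub_sub_fderiv_le {F : Type*} [NormedAddCommGroup F] [NormedSpace ℝ F]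
    {g : E → F} {C : NNReal} (hs : Convex ℝ s) (hg : ∀ z ∈ s, DifferentiableAt ℝ g z)
    (hg' : LipschitzOnWith C (fderiv ℝ g) s) {z u : E} (hz : z ∈ s) (hu : u ∈ s) :
    ‖g u - g z - fderiv ℝ g z (u - z)‖ ≤ C * ‖u - z‖ ^ 2 := by
  have hseg := hs.segment_subset hz hu
  have bound : ∀ v ∈ segment ℝ z u, ‖fderiv ℝ g v - fderiv ℝ g z‖ ≤ C * ‖u - z‖ := fun v hv ↦
    calc ‖fderiv ℝ g v - fderiv ℝ g z‖ ≤ C * ‖v - z‖ := by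
          simpa only [dist_eq_norm] using hg'.dist_le_mul v (hseg hv) z hz
      _ ≤ C * ‖u - z‖ := by gcongr; exact norm_sub_le_of_mem_segment hv
  calc ‖g u - g z - fderiv ℝ g z (u - z)‖ ≤ C * ‖u - z‖ * ‖u - z‖ :=
        (convex_segment z u).norm_image_sub_le_of_norm_fderiv_le' (fun v hv ↦ hg v (hseg hv))
          bound (left_mem_segment ℝ z u) (right_mem_segment ℝ z u)
    _ = C * ‖u - z‖ ^ 2 := by ring

lemma strongConcaveOn_of_lipschitzOnWith_fderiv {g : E → ℝ} {C : NNReal} (hs : Convex ℝ s)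
    (hg : ∀ z ∈ s, DifferentiableAt ℝ g z) (hg' : LipschitzOnWith C (fderiv ℝ g) s) :
    StrongConcaveOn s (-(2 * C)) g := by
  refine ⟨hs, fun a ha b hb ta tb hta htb hab ↦ ?_⟩
  obtain rfl : tb = 1 - ta := eq_sub_of_add_eq' hab
  set c := ta • a + (1 - ta) • b
  have hc : c ∈ s := hs ha hb hta htb hab
  have hac : a - c = (1 - ta) • (a - b) := by module
  have hbc : b - c = -(ta • (a - b)) := by module
  have ha' := (abs_le.1 (hs.norm_image_sub_sub_fderiv_le hg hg' hc ha)).2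
  have hb' := (abs_le.1 (hs.norm_image_sub_sub_fderiv_le hg hg' hc hb)).2
  rw [hac, map_smul, norm_smul, Real.norm_of_nonneg htb, smul_eq_mul] at ha'
  rw [hbc, map_neg, map_smul, norm_neg, norm_smul, Real.norm_of_nonneg hta, smul_eq_mul] at hb'
  simp only [smul_eq_mul]
  nlinarith [mul_le_mul_of_nonneg_left ha' hta, mul_le_mul_of_nonneg_left hb' htb]

lemma UniformConcaveOn.comp_const_sub {φ : ℝ → ℝ} {g : E → ℝ} (hg : UniformConcaveOn t φ g)
    (hs : Convex ℝ s) {y : E} (hst : ∀ x ∈ s, y - x ∈ t) :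
    UniformConcaveOn s φ fun x ↦ g (y - x) := by
  refine ⟨hs, fun a ha b hb ta tb hta htb hab ↦ ?_⟩
  have h := hg.2 (hst a ha) (hst b hb) hta htb hab
  rwa [show ta • (y - a) + tb • (y - b) = y - (ta • a + tb • b) by
      rw [smul_sub, smul_sub, sub_add_sub_comm, ← add_smul, hab, one_smul],
    sub_sub_sub_cancel_left, norm_sub_rev] at h

theorem exists_strongConvexOn_lipschitzOnWith_ciSup_sub [ProperSpace E] [Nonempty ι]
    {L : E → ℝ} {R r : ℝ} (hL : ContDiffOn ℝ 2 L (ball 0 R)) (hr : r < R) (hs : Convex ℝ s)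
    (p : ι → E) (c : ι → ℝ) (hc : BddAbove (range c)) (hp : ∀ i, ∀ x ∈ s, ‖p i - x‖ ≤ r) :
    ∃ C > 0, StrongConvexOn s (-C) (fun x ↦ ⨆ i, c i - L (p i - x)) ∧
      ∃ K, LipschitzOnWith K (fun x ↦ ⨆ i, c i - L (p i - x)) s := by
  have hK : closedBall (0 : E) r ⊆ ball 0 R := closedBall_subset_ball hr
  have hpK : ∀ i, ∀ x ∈ s, p i - x ∈ closedBall (0 : E) r := fun i x hx ↦
    mem_closedBall_zero_iff.2 (hp i x hx)
  obtain ⟨C₁, hC₁⟩ := (hL.mono hK).exists_lipschitzOnWith two_ne_zero (convex_closedBall 0 r)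
    (isCompact_closedBall 0 r)
  obtain ⟨C₂, hC₂⟩ := ((hL.fderiv_of_isOpen isOpen_ball (m := 1) le_rfl).mono
    hK).exists_lipschitzOnWith one_ne_zero (convex_closedBall 0 r) (isCompact_closedBall 0 r)
  have hdiff : ∀ z ∈ closedBall (0 : E) r, DifferentiableAt ℝ L z := fun z hz ↦
    (hL.contDiffAt (isOpen_ball.mem_nhds (hK hz))).differentiableAt two_ne_zero
  obtain ⟨m, hm⟩ := (isCompact_closedBall (0 : E) r).bddBelow_image (hL.continuousOn.mono hK)
  obtain ⟨M, hM⟩ := hc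
  have hbdd : ∀ x ∈ s, BddAbove (range fun i ↦ c i - L (p i - x)) := fun x hx ↦
    ⟨M - m, by rintro _ ⟨i, rfl⟩; linarith [hM ⟨i, rfl⟩, hm ⟨_, hpK i x hx, rfl⟩]⟩
  have hconv : ∀ i, StrongConvexOn s (-(2 * C₂)) fun x ↦ c i - L (p i - x) := fun i ↦ by
    simpa [StrongConvexOn, Pi.sub_def] using (convexOn_const (c i) hs).uniformConvexOn_zero.sub
      ((strongConcaveOn_of_lipschitzOnWith_fderiv (convex_closedBall 0 r) hdiff hC₂).comp_const_sub
        hs (hpK i))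
  have hlip : ∀ i, LipschitzOnWith C₁ (fun x ↦ c i - L (p i - x)) s := fun i ↦
    LipschitzOnWith.of_dist_le_mul fun x hx x' hx' ↦ by
      simpa [Real.dist_eq, dist_eq_norm, abs_sub_comm, norm_sub_rev] using
        hC₁.dist_le_mul _ (hpK i x hx) _ (hpK i x' hx')
  refine ⟨2 * C₂ + 1, by positivity, ?_, C₁, LipschitzOnWith.ciSup hlip hbdd⟩
  exact StrongConvexOn.mono (by linarith) (UniformConvexOn.ciSup hconv hbdd)

end Semiconvexity

lemma IsCompact.exists_forall_le_coe_of_upperSemicontinuousOn {α : Type*} [TopologicalSpace α]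
    {f : α → EReal} {K : Set α} (hK : IsCompact K) (hf : UpperSemicontinuousOn f K)
    (htop : ∀ y ∈ K, f y < ⊤) : ∃ M : ℝ, ∀ y ∈ K, f y ≤ M := by
  rcases K.eq_empty_or_nonempty with rfl | hne
  · exact ⟨0, by simp⟩
  obtain ⟨y₀, hy₀, hmax⟩ := hf.exists_isMaxOn hne hK
  exact ⟨(f y₀).toReal, fun y hy ↦ (hmax hy).trans (EReal.le_coe_toReal (htop y₀ hy₀).ne)⟩

lemma Continuous.exists_lt_forall_coe_le_of_le_norm {E : Type*} [NormedAddCommGroup E]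
    [ProperSpace E] {f : E → EReal} {R : ℝ} (hf : Continuous f)
    (hfR : ∀ z, f z < ⊤ → ‖z‖ < R) (M : ℝ) :
    ∃ r < R, ∀ z, r ≤ ‖z‖ → (M : EReal) ≤ f z := by
  obtain ⟨r, hr, hsub⟩ := exists_lt_subset_ball (isClosed_le hf continuous_const)
    fun z (hz : f z ≤ M) ↦ mem_ball_zero_iff.2 (hfR z (hz.trans_lt (EReal.coe_lt_top M)))
  refine ⟨r, hr, fun z hz ↦ ?_⟩
  by_contra! h
  exact (mem_ball_zero_iff.1 (hsub (show f z ≤ M from h.le))).not_ge hz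

lemma EReal.biSup_coe_eq_coe_ciSup {α : Type*} {Y : Set α} {g : α → ℝ} (hY : Y.Nonempty)
    (hg : BddAbove (g '' Y)) : ⨆ y ∈ Y, (g y : EReal) = ((⨆ y : Y, g y : ℝ) : EReal) := by
  have := hY.to_subtype
  rw [iSup_subtype', Monotone.map_ciSup_of_continuousAt continuous_coe_real_ereal.continuousAt
    EReal.coe_strictMono.monotone (by rwa [← image_eq_range])]

section Transform

variable {d : ℕ} {R : ℝ} {Lfun φ₁ : EuclideanSpace ℝ (Fin d) → EReal}
  {x y xbar : EuclideanSpace ℝ (Fin d)}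

lemma le_bwTransform (hy : y ∈ ball x R) : φ₁ y - Lfun (y - x) ≤ bwTransform R Lfun φ₁ x :=
  le_iSup₂ (f := fun y (_ : y ∈ ball x R) ↦ φ₁ y - Lfun (y - x)) y hy

lemma lt_top_of_bwTransform_lt_top (hx : bwTransform R Lfun φ₁ x < ⊤) (hy : y ∈ ball x R)
    (hL : Lfun (y - x) ≠ ⊤) : φ₁ y < ⊤ := by
  refine lt_top_iff_ne_top.2 fun h ↦ ?_
  have := le_bwTransform (Lfun := Lfun) (φ₁ := φ₁) hy
  rw [h, EReal.top_sub hL, top_le_iff] at this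
  exact hx.ne this

lemma bwTransform_eq_iSup (hLtop : ∀ z, R ≤ ‖z‖ → Lfun z = ⊤) (x : EuclideanSpace ℝ (Fin d)) :
    bwTransform R Lfun φ₁ x = ⨆ y, φ₁ y - Lfun (y - x) := by
  refine le_antisymm (iSup₂_le fun y _ ↦ le_iSup (fun y ↦ φ₁ y - Lfun (y - x)) y)
    (iSup_le fun y ↦ ?_)
  by_cases hy : y ∈ ball x R
  · exact le_bwTransform hy
  · -- outside `ball x R` the term is `φ₁ y - ⊤ = ⊥`, even when `φ₁ y = ⊤`
    rw [hLtop _ (by simpa [dist_eq_norm] using hy), EReal.sub_top]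
    exact bot_le

lemma lowerSemicontinuous_bwTransform (hLcont : Continuous Lfun)
    (hLtop : ∀ z, R ≤ ‖z‖ → Lfun z = ⊤) : LowerSemicontinuous (bwTransform R Lfun φ₁) := by
  rw [funext (bwTransform_eq_iSup hLtop)]
  exact lowerSemicontinuous_iSup fun y ↦ EReal.lowerSemicontinuous_add.comp
    (continuous_const.prodMk (hLcont.comp (continuous_const.sub continuous_id)).neg)

lemma bwTransform_eq_biSup {Y : Set (EuclideanSpace ℝ (Fin d))} {m : EReal}
    (hY : Y ⊆ ball x R) (hm : m < bwTransform R Lfun φ₁ x)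
    (hout : ∀ y ∈ ball x R, y ∉ Y → φ₁ y - Lfun (y - x) ≤ m) :
    bwTransform R Lfun φ₁ x = ⨆ y ∈ Y, φ₁ y - Lfun (y - x) := by
  refine le_antisymm ?_ (biSup_mono hY)
  have : bwTransform R Lfun φ₁ x ≤ (⨆ y ∈ Y, φ₁ y - Lfun (y - x)) ⊔ m := iSup₂_le fun y hy ↦ by
    by_cases hyY : y ∈ Y
    · exact le_sup_of_le_left (le_iSup₂ (f := fun y (_ : y ∈ Y) ↦ φ₁ y - Lfun (y - x)) y hyY)
    · exact le_sup_of_le_right (hout y hy hyY)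
  exact (le_sup_iff.1 this).resolve_right hm.not_ge

lemma exists_ball_add_forall_le_coe (hR : 0 < R) (hLfin : ∀ z, ‖z‖ < R → Lfun z ≠ ⊤)
    (hφ₁ : UpperSemicontinuous φ₁) (hint : xbar ∈ interior {x | bwTransform R Lfun φ₁ x < ⊤}) :
    ∃ ε > 0, ∃ M : ℝ, ∀ y ∈ ball xbar (R + ε), φ₁ y ≤ M := by
  obtain ⟨ε, hε, hball⟩ := Metric.mem_nhds_iff.1 (mem_interior_iff_mem_nhds.1 hint)
  have htop : ∀ y ∈ closedBall xbar (R + ε / 2), φ₁ y < ⊤ := fun y hy ↦ by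
    have hy' : y ∈ ball (xbar + 0) (ε + R) := by
      rw [add_zero, add_comm]; exact closedBall_subset_ball (by linarith) hy
    rw [← ball_add_ball hε hR] at hy'
    obtain ⟨x, hx, z, hz, rfl⟩ := hy'
    rw [mem_ball_zero_iff] at hz
    exact lt_top_of_bwTransform_lt_top (hball hx) (by simpa [dist_eq_norm] using hz)
      (by simpa using hLfin z hz)
  obtain ⟨M, hM⟩ := IsCompact.exists_forall_le_coe_of_upperSemicontinuousOn
    (isCompact_closedBall xbar (R + ε / 2)) (hφ₁.upperSemicontinuousOn _) htop
  exact ⟨ε / 2, by positivity, M, fun y hy ↦ hM y (ball_subset_closedBall hy)⟩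

lemma exists_localization_constants (hR : 0 < R) (hLcont : Continuous Lfun)
    (hLfin : ∀ z, Lfun z < ⊤ ↔ ‖z‖ < R) (hφ₁ : UpperSemicontinuous φ₁)
    (hbot : ⊥ < bwTransform R Lfun φ₁ xbar)
    (hint : xbar ∈ interior {x | bwTransform R Lfun φ₁ x < ⊤}) :
    ∃ ρ > 0, ∃ r : ℝ, r + 2 * ρ < R ∧ ∃ M m : ℝ, (∀ y ∈ ball xbar (R + ρ), φ₁ y ≤ M) ∧
      (∀ z, r ≤ ‖z‖ → ((M - m : ℝ) : EReal) ≤ Lfun z) ∧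
      ∀ x ∈ ball xbar ρ, (m : EReal) < bwTransform R Lfun φ₁ x := by
  have hLtop : ∀ z, R ≤ ‖z‖ → Lfun z = ⊤ := fun z hz ↦
    not_lt_top_iff.1 fun h ↦ ((hLfin z).1 h).not_ge hz
  obtain ⟨ε, hε, M, hM⟩ :=
    exists_ball_add_forall_le_coe hR (fun z hz ↦ ((hLfin z).2 hz).ne) hφ₁ hint
  obtain ⟨m, -, hm⟩ := EReal.exists_between_coe_real hbot
  obtain ⟨ρ₁, hρ₁, hlow⟩ := Metric.eventually_nhds_iff_ball.1
    (lowerSemicontinuous_bwTransform hLcont hLtop xbar m hm)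
  obtain ⟨r, hr, hlayer⟩ := hLcont.exists_lt_forall_coe_le_of_le_norm (fun z ↦ (hLfin z).1) (M - m)
  set ρ := min (min ε ρ₁) ((R - r) / 3)
  have hρε : ρ ≤ ε := (min_le_left _ _).trans (min_le_left _ _)
  have hρρ₁ : ρ ≤ ρ₁ := (min_le_left _ _).trans (min_le_right _ _)
  have hρr : ρ ≤ (R - r) / 3 := min_le_right _ _
  refine ⟨ρ, lt_min (lt_min hε hρ₁) (by linarith), r, by linarith, M, m,
    fun y hy ↦ hM y (ball_subset_ball (by linarith) hy), hlayer,
    fun x hx ↦ hlow x (ball_subset_ball hρρ₁ hx)⟩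

lemma bwTransform_eq_biSup_closedBall {ρ r M m : ℝ} (hr : r + 2 * ρ ≤ R)
    (hx : x ∈ ball xbar ρ) (hM : ∀ y ∈ ball xbar (R + ρ), φ₁ y ≤ M)
    (hlayer : ∀ z, r ≤ ‖z‖ → ((M - m : ℝ) : EReal) ≤ Lfun z)
    (hm : (m : EReal) < bwTransform R Lfun φ₁ x) :
    bwTransform R Lfun φ₁ x =
      ⨆ y ∈ {y | y ∈ closedBall xbar (r + ρ) ∧ φ₁ y ≠ ⊥}, φ₁ y - Lfun (y - x) := by
  have hx₁ := mem_ball.1 hx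
  have hx₂ := mem_ball'.1 hx
  refine bwTransform_eq_biSup (fun y hy ↦ mem_ball.2 ?_) hm fun y hy hyY ↦ ?_
  · linarith [dist_triangle y xbar x, mem_closedBall.1 hy.1]
  rcases eq_or_ne (φ₁ y) ⊥ with hbot | hne
  · rw [hbot, EReal.bot_sub]; exact bot_le
  have hfar : r + ρ < dist y xbar := not_le.1 fun h ↦ hyY ⟨h, hne⟩
  have hyM : φ₁ y ≤ M := hM y (mem_ball.2 (by linarith [dist_triangle y x xbar, mem_ball.1 hy]))
  have hyL := hlayer (y - x) (by rw [← dist_eq_norm]; linarith [dist_triangle y x xbar])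
  calc φ₁ y - Lfun (y - x) ≤ M - ((M - m : ℝ) : EReal) := EReal.sub_le_sub hyM hyL
    _ = m := by rw [← EReal.coe_sub, sub_sub_cancel]

theorem exists_ball_bwTransform_eq_ciSup {L : EuclideanSpace ℝ (Fin d) → ℝ} (hR : 0 < R)
    (hLcont : Continuous Lfun) (hLnonneg : ∀ z, 0 ≤ Lfun z) (hLfin : ∀ z, Lfun z < ⊤ ↔ ‖z‖ < R)
    (hLL : ∀ z ∈ ball 0 R, Lfun z = L z) (hφ₁ : UpperSemicontinuous φ₁)
    (hbot : ⊥ < bwTransform R Lfun φ₁ xbar)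
    (hint : xbar ∈ interior {x | bwTransform R Lfun φ₁ x < ⊤}) :
    ∃ ρ > 0, ∃ r < R, ∃ Y : Set (EuclideanSpace ℝ (Fin d)), Y.Nonempty ∧
      BddAbove ((fun y ↦ (φ₁ y).toReal) '' Y) ∧ (∀ y ∈ Y, ∀ x ∈ ball xbar ρ, ‖y - x‖ ≤ r) ∧
      ∀ x ∈ ball xbar ρ, bwTransform R Lfun φ₁ x = ↑(⨆ y : Y, (φ₁ y).toReal - L (y - x)) := by
  obtain ⟨ρ, hρ, r, hr, M, m, hM, hlayer, hm⟩ :=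
    exists_localization_constants hR hLcont hLfin hφ₁ hbot hint
  set Y := {y | y ∈ closedBall xbar (r + ρ) ∧ φ₁ y ≠ ⊥}
  have hdist : ∀ y ∈ Y, ∀ x ∈ ball xbar ρ, dist y x < r + 2 * ρ := fun y hy x hx ↦ by
    linarith [dist_triangle_right y x xbar, mem_closedBall.1 hy.1, mem_ball.1 hx]
  have hYM : ∀ y ∈ Y, φ₁ y ≤ M := fun y hy ↦ hM y (closedBall_subset_ball (by linarith) hy.1)
  have hYcoe : ∀ y ∈ Y, φ₁ y = (φ₁ y).toReal := fun y hy ↦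
    (EReal.coe_toReal ((hYM y hy).trans_lt (EReal.coe_lt_top M)).ne hy.2).symm
  have hYM' : ∀ y ∈ Y, (φ₁ y).toReal ≤ M := fun y hy ↦ by
    exact_mod_cast (hYcoe y hy).symm.le.trans (hYM y hy)
  have hLx : ∀ y ∈ Y, ∀ x ∈ ball xbar ρ, Lfun (y - x) = L (y - x) := fun y hy x hx ↦
    hLL _ (by simpa [dist_eq_norm] using (hdist y hy x hx).trans hr)
  have hrep : ∀ x ∈ ball xbar ρ,
      bwTransform R Lfun φ₁ x = ⨆ y ∈ Y, (((φ₁ y).toReal - L (y - x) : ℝ) : EReal) := by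
    intro x hx
    rw [bwTransform_eq_biSup_closedBall hr.le hx hM hlayer (hm x hx)]
    refine biSup_congr fun y hy ↦ ?_
    rw [EReal.coe_sub, ← hYcoe y hy, hLx y hy x hx]
  have hne : Y.Nonempty := by
    by_contra h
    have := hrep xbar (mem_ball_self hρ)
    rw [not_nonempty_iff_eq_empty.1 h] at this
    simp only [mem_empty_iff_false, iSup_false, iSup_bot] at this
    exact hbot.ne' this
  have hbdd : ∀ x ∈ ball xbar ρ, BddAbove ((fun y ↦ (φ₁ y).toReal - L (y - x)) '' Y) :=
    fun x hx ↦ ⟨M, by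
      rintro _ ⟨y, hy, rfl⟩
      have h0 : (0 : EReal) ≤ L (y - x) := hLx y hy x hx ▸ hLnonneg (y - x)
      linarith [hYM' y hy, EReal.coe_nonneg.1 h0]⟩
  refine ⟨ρ, hρ, r + 2 * ρ, hr, Y, hne, ⟨M, by rintro _ ⟨y, hy, rfl⟩; exact hYM' y hy⟩,
    fun y hy x hx ↦ by simpa [dist_eq_norm] using (hdist y hy x hx).le,
    fun x hx ↦ (hrep x hx).trans (EReal.biSup_coe_eq_coe_ciSup hne (hbdd x hx))⟩

end Transform

theorem statement_13_general (d : ℕ) (R : ℝ) (hR : 0 < R)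
    (Lfun : EuclideanSpace ℝ (Fin d) → EReal)
    (hLcont : Continuous Lfun)
    (hLnonneg : ∀ z, 0 ≤ Lfun z)
    (hLfin : ∀ z, Lfun z < ⊤ ↔ ‖z‖ < R)
    (L : EuclideanSpace ℝ (Fin d) → ℝ)
    (hLL : ∀ z ∈ Metric.ball (0 : EuclideanSpace ℝ (Fin d)) R, Lfun z = ((L z : ℝ) : EReal))
    (hLC2 : ContDiffOn ℝ 2 L (Metric.ball 0 R))
    (φ₁ : EuclideanSpace ℝ (Fin d) → EReal)
    (hφ₁ : UpperSemicontinuous φ₁)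
    (φ₀ : EuclideanSpace ℝ (Fin d) → EReal)
    (hφ₀ : φ₀ = bwTransform R Lfun φ₁) :
    ∀ xbar ∈ {x | ⊥ < φ₀ x} ∩ interior {x | φ₀ x < ⊤},
      ∃ ρ > (0 : ℝ), ∃ C > (0 : ℝ), ∃ f : EuclideanSpace ℝ (Fin d) → ℝ,
        (∀ x ∈ Metric.ball xbar ρ, φ₀ x = ((f x : ℝ) : EReal)) ∧
        ConvexOn ℝ (Metric.ball xbar ρ) (fun x => f x + C / 2 * ‖x‖ ^ 2) ∧
        ∃ K : NNReal, LipschitzOnWith K f (Metric.ball xbar ρ) := by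
  intro xbar ⟨hbot, hint⟩
  subst hφ₀
  obtain ⟨ρ, hρ, r, hr, Y, hne, hc, hY, heq⟩ :=
    exists_ball_bwTransform_eq_ciSup hR hLcont hLnonneg hLfin hLL hφ₁ hbot hint
  have := hne.to_subtype
  rw [image_eq_range] at hc
  obtain ⟨C, hC, hconv, K, hK⟩ := exists_strongConvexOn_lipschitzOnWith_ciSup_sub hLC2 hr
    (convex_ball xbar ρ) Subtype.val (fun y : Y ↦ (φ₁ y).toReal) hc fun y x hx ↦ hY y y.2 x hx
  refine ⟨ρ, hρ, C, hC, _, heq, ?_, K, hK⟩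
  simpa [neg_div] using strongConvexOn_iff_convex.1 hconv

theorem statement_13 (d : ℕ) (hd : 1 ≤ d) (R : ℝ) (hR : 0 < R)
    (Lfun : EuclideanSpace ℝ (Fin d) → EReal)
    (hLcont : Continuous Lfun)
    (hLnonneg : ∀ z, 0 ≤ Lfun z)
    (hL0 : Lfun 0 = 0)
    (hLfin : ∀ z, Lfun z < ⊤ ↔ ‖z‖ < R)
    (L : EuclideanSpace ℝ (Fin d) → ℝ)
    (hLL : ∀ z ∈ Metric.ball (0 : EuclideanSpace ℝ (Fin d)) R, Lfun z = ((L z : ℝ) : EReal))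
    (hLC2 : ContDiffOn ℝ 2 L (Metric.ball 0 R))
    (lamStar : ℝ) (hlam : 0 < lamStar)
    (hLconv : ∀ z ∈ Metric.ball (0 : EuclideanSpace ℝ (Fin d)) R,
      ∀ v : EuclideanSpace ℝ (Fin d),
        lamStar * ‖v‖ ^ 2 ≤ fderiv ℝ (fderiv ℝ L) z v v)
    (φ₁ : EuclideanSpace ℝ (Fin d) → EReal)
    (hφ₁ : UpperSemicontinuous φ₁)
    (φ₀ : EuclideanSpace ℝ (Fin d) → EReal)
    (hφ₀ : φ₀ = bwTransform R Lfun φ₁) :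
    ∀ xbar ∈ {x | ⊥ < φ₀ x} ∩ interior {x | φ₀ x < ⊤},
      ∃ ρ > (0 : ℝ), ∃ C > (0 : ℝ), ∃ f : EuclideanSpace ℝ (Fin d) → ℝ,
        (∀ x ∈ Metric.ball xbar ρ, φ₀ x = ((f x : ℝ) : EReal)) ∧
        ConvexOn ℝ (Metric.ball xbar ρ) (fun x => f x + C / 2 * ‖x‖ ^ 2) ∧
        ∃ K : NNReal, LipschitzOnWith K f (Metric.ball xbar ρ) :=
  statement_13_general d R hR Lfun hLcont hLnonneg hLfin L hLL hLC2 φ₁ hφ₁ φ₀ hφ₀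
end
end

section
/- Let x ∈ Ω₀ be a point at which φ₀ is (Fréchet) differentiable. Then the section M_{0→1}[x] contains exactly one point, denoted T(x); it satisfies |x − T(x)| < R and ∇φ₀(x) = ∇𝕃(T(x) − x), equivalently T(x) = x + (∇𝕃)^{−1}(∇φ₀(x)). If moreover φ₀ admits a second-order Alexandrov expansion at x with symmetric Hessian matrix D²φ₀(x) (i.e. φ₀(y) = φ₀(x) + ⟨∇φ₀(x), y−x⟩ + ½⟨D²φ₀(x)(y−x), y−x⟩ + o(|y−x|²)), then D²φ₀(x) ≥ −D²𝕃(T(x) − x) in the sense of symmetric matrices, and the matrix DT(x) := I + (D²𝕃(T(x) − x))^{−1} D²φ₀(x) is diagonalizable over ℝ with nonnegative eigenvalues. -/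
noncomputable section

open scoped Classical RealInnerProductSpace

/-- The section `M_{0→1}[x]` of the finite contact set of the `𝕃`-transform pair. -/
def MsecBT {d : ℕ} (Lfun φ₀ φ₁ : EuclideanSpace ℝ (Fin d) → EReal)
    (x : EuclideanSpace ℝ (Fin d)) : Set (EuclideanSpace ℝ (Fin d)) :=
  {y | φ₀ x ≠ ⊥ ∧ φ₀ x ≠ ⊤ ∧ φ₁ y ≠ ⊥ ∧ φ₁ y ≠ ⊤ ∧ φ₁ y = Lfun (y - x) + φ₀ x}

/-!
At a contact point `y` of `x`, the inequality `φ₀ x' ≥ φ₁ y - 𝕃 (y - x')`, an equality at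
`x' = x`, says that `x' ↦ φ₀ x' + 𝕃 (y - x')` has a local minimum at `x`. The first-order
condition gives `∇𝕃 (y - x) = ∇φ₀ x`, and `∇𝕃` is injective by uniform convexity, so there is at
most one contact point. There is one because `φ₁` is bounded above away from `x` (as `φ₀` is
finite near `x`) while `𝕃 → +∞` at the sphere of radius `R`, so the supremum defining `φ₀ x` is
attained on a compact ball where `φ₁ - 𝕃 (· - x)` is upper semicontinuous. The second-order
condition at the minimum gives `D²φ₀ x + D²𝕃 (T x - x) ≥ 0`; conjugating by `H^{-1/2}`, where
`H = D²𝕃 (T x - x)`, turns `DT x = 1 + H⁻¹ D²φ₀ x` into the positive semidefinite symmetric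
`H^{-1/2} (H + D²φ₀ x) H^{-1/2}`.
-/

open Filter Topology Asymptotics Metric Set

theorem Convex.injOn_of_hasFDerivAt_of_pos {E : Type*} [NormedAddCommGroup E] [NormedSpace ℝ E]
    {s : Set E} (hs : Convex ℝ s) {f' : E → E →L[ℝ] ℝ} {f'' : E → E →L[ℝ] E →L[ℝ] ℝ}
    (hf' : ∀ z ∈ s, HasFDerivAt f' (f'' z) z) (hpos : ∀ z ∈ s, ∀ u ≠ 0, 0 < f'' z u u) :
    InjOn f' s := by
  intro a ha b hb hab
  by_contra hne
  have hc : ∀ t ∈ Icc (0 : ℝ) 1, b + t • (a - b) ∈ s := fun t ht => hs.add_smul_sub_mem hb ha ht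
  have hg : ∀ t ∈ Icc (0 : ℝ) 1, HasDerivAt (fun t : ℝ => f' (b + t • (a - b)) (a - b))
      (f'' (b + t • (a - b)) (a - b) (a - b)) t := fun t ht => by
    have hline : HasDerivAt (fun t : ℝ => b + t • (a - b)) (a - b) t := by
      simpa using ((hasDerivAt_id t).smul_const (a - b)).const_add b
    have hcomp := (hf' _ (hc t ht)).comp_hasDerivAt t hline
    have happ := hcomp.clm_apply (hasDerivAt_const t (a - b))
    simp only [map_zero, add_zero] at happ
    exact happ
  obtain ⟨τ, hτ, hslope⟩ := exists_hasDerivAt_eq_slope _ _ one_pos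
    (fun t ht => (hg t ht).continuousAt.continuousWithinAt)
    (fun t ht => hg t (Ioo_subset_Icc_self ht))
  rw [one_smul, add_sub_cancel, zero_smul, add_zero, hab, sub_self, zero_div] at hslope
  exact (hpos _ (hc τ (Ioo_subset_Icc_self hτ)) _ (sub_ne_zero.mpr hne)).ne' hslope

theorem IsLocalMin.hasGradientAt_of_add_comp_sub {F : Type*} [NormedAddCommGroup F]
    [InnerProductSpace ℝ F] [CompleteSpace F] {f L : F → ℝ} {x y p : F}
    (hmin : IsLocalMin (fun x' => f x' + L (y - x')) x) (hf : HasGradientAt f p x)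
    (hL : DifferentiableAt ℝ L (y - x)) : HasGradientAt L p (y - x) := by
  have h0 := hmin.hasFDerivAt_eq_zero
    (hf.hasFDerivAt.add (hL.hasFDerivAt.comp x ((hasFDerivAt_id x).const_sub y)))
  have hdL : fderiv ℝ L (y - x) = InnerProductSpace.toDual ℝ F p := by
    ext v
    have hv := congr($h0 v)
    simp only [ContinuousLinearMap.comp_neg, ContinuousLinearMap.comp_id, add_apply,
      InnerProductSpace.toDual_apply_apply, neg_apply, zero_apply] at hv ⊢
    linarith
  rw [hasGradientAt_iff_hasFDerivAt, ← hdL]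
  exact hL.hasFDerivAt

theorem nonneg_of_eventually_nonneg_of_isLittleO_sq {φ : ℝ → ℝ} {c : ℝ}
    (hφ : ∀ᶠ h in 𝓝[>] 0, 0 ≤ φ h)
    (ho : (fun h => φ h - h ^ 2 * c) =o[𝓝[>] 0] fun h => h ^ 2) : 0 ≤ c := by
  by_contra! hc
  obtain ⟨h, hφh, hoh, hpos⟩ :=
    (hφ.and ((ho.def (by linarith : 0 < -c / 2)).and self_mem_nhdsWithin)).exists
  rw [Real.norm_eq_abs, Real.norm_eq_abs, abs_of_nonneg (sq_nonneg h)] at hoh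
  nlinarith [abs_le.mp hoh, pow_pos (show 0 < h from hpos) 2]

theorem Asymptotics.IsLittleO.comp_add_smul_sq {E : Type*} [NormedAddCommGroup E]
    [NormedSpace ℝ E] {g : E → ℝ} {x : E} (hg : g =o[𝓝 x] fun y => ‖y - x‖ ^ 2) (w : E) :
    (fun h : ℝ => g (x + h • w)) =o[𝓝 0] fun h => h ^ 2 := by
  have hlim : Tendsto (fun h : ℝ => x + h • w) (𝓝 0) (𝓝 x) :=
    (by fun_prop : Continuous fun h : ℝ => x + h • w).tendsto' 0 x (by simp)
  refine (hg.comp_tendsto hlim).trans_isBigO (IsBigO.of_bound (‖w‖ ^ 2) ?_)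
  filter_upwards with h
  simp [norm_smul, mul_pow, mul_comm]

section InnerProductSpace

variable {E : Type*} [NormedAddCommGroup E] [InnerProductSpace ℝ E]

theorem hessian_add_nonneg_of_isLocalMin_of_sub_mem {f L : E → ℝ} {L' : E → E →L[ℝ] ℝ}
    {L'' : E →L[ℝ] E →L[ℝ] ℝ} {s : Set E} (hs : IsOpen s) (hsc : Convex ℝ s)
    (hL : ∀ z ∈ s, HasFDerivAt L (L' z) z) {x T p : E} (hT : T - x ∈ s)
    (hL'' : HasFDerivAt L' L'' (T - x)) (hp : ∀ v, L' (T - x) v = ⟪p, v⟫)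
    {A : E →L[ℝ] E}
    (hf : (fun y => f y - f x - ⟪p, y - x⟫ - 1 / 2 * ⟪A (y - x), y - x⟫) =o[𝓝 x]
      fun y => ‖y - x‖ ^ 2)
    (hmin : IsLocalMin (fun y => f y + L (T - y)) x) {w : E} (hw : T - x - w ∈ s) :
    0 ≤ ⟪A w, w⟫ + L'' w w := by
  have hTaylor := hsc.taylor_approx_two_segment (f := L) (v := 0) (w := -w)
    (by simpa [hs.interior_eq] using hL) hT (by simpa [hs.interior_eq] using hL''.hasFDerivWithinAt)
    (by simpa [hs.interior_eq] using hT) (by simpa [hs.interior_eq, sub_eq_add_neg] using hw)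
  have hlim : Tendsto (fun h : ℝ => x + h • w) (𝓝[>] 0) (𝓝 x) :=
    ((by fun_prop : Continuous fun h : ℝ => x + h • w).tendsto' 0 x (by simp)).mono_left
      nhdsWithin_le_nhds
  refine le_of_mul_le_mul_left (a := 1 / 2) ?_ one_half_pos
  rw [mul_zero]
  refine nonneg_of_eventually_nonneg_of_isLittleO_sq (φ := fun h =>
    f (x + h • w) + L (T - (x + h • w)) - (f x + L (T - x))) ?_ ?_
  · filter_upwards [hlim.eventually hmin] with h hh using sub_nonneg.mpr hh
  · refine (((hf.comp_add_smul_sq w).mono nhdsWithin_le_nhds).add hTaylor).congr_left fun h => ?_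
    simp only [add_sub_cancel_left, inner_smul_left, inner_smul_right, map_smul, map_neg, map_zero,
      neg_apply, zero_apply, smul_zero, add_zero,
      smul_eq_mul, hp, inner_neg_right, neg_neg, RCLike.conj_to_real]
    rw [show T - (x + h • w) = T - x + h • -w by rw [smul_neg]; abel]
    ring

theorem hessian_add_nonneg_of_isLocalMin {f L : E → ℝ} {L' : E → E →L[ℝ] ℝ}
    {L'' : E →L[ℝ] E →L[ℝ] ℝ} {s : Set E} (hs : IsOpen s) (hsc : Convex ℝ s)
    (hL : ∀ z ∈ s, HasFDerivAt L (L' z) z) {x T p : E} (hT : T - x ∈ s)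
    (hL'' : HasFDerivAt L' L'' (T - x)) (hp : ∀ v, L' (T - x) v = ⟪p, v⟫)
    {A : E →L[ℝ] E}
    (hf : (fun y => f y - f x - ⟪p, y - x⟫ - 1 / 2 * ⟪A (y - x), y - x⟫) =o[𝓝 x]
      fun y => ‖y - x‖ ^ 2)
    (hmin : IsLocalMin (fun y => f y + L (T - y)) x) (v : E) :
    0 ≤ ⟪A v, v⟫ + L'' v v := by
  have hlim : Tendsto (fun t : ℝ => T - x - t • v) (𝓝[>] 0) (𝓝 (T - x)) :=
    ((by fun_prop : Continuous fun t : ℝ => T - x - t • v).tendsto' 0 _ (by simp)).mono_left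
      nhdsWithin_le_nhds
  obtain ⟨t, hts, ht⟩ := ((hlim.eventually (hs.mem_nhds hT)).and self_mem_nhdsWithin).exists
  have := hessian_add_nonneg_of_isLocalMin_of_sub_mem hs hsc hL hT hL'' hp hf hmin hts
  simp only [map_smul, inner_smul_left, inner_smul_right, smul_apply,
    smul_eq_mul, RCLike.conj_to_real] at this
  have ht2 : 0 < t * t := mul_pos ht ht
  nlinarith

theorem ContinuousLinearMap.isPositive_of_inner_eq {T : E →L[ℝ] E} {Q : E → E → ℝ}
    (hTQ : ∀ v w, ⟪T v, w⟫ = Q v w)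
    (hQ : ∀ v w, Q v w = Q w v) (hQpos : ∀ v, 0 ≤ Q v v) : T.IsPositive := by
  rw [ContinuousLinearMap.isPositive_iff]
  refine ⟨fun v w => ?_, fun v => (hTQ v v).symm ▸ hQpos v⟩
  change ⟪T v, w⟫ = ⟪v, T w⟫
  rw [hTQ, hQ, ← hTQ, real_inner_comm]

theorem ContinuousLinearMap.IsPositive.of_mul_eq_one {H Hinv : E →L[ℝ] E} (hH : H.IsPositive)
    (hr : H * Hinv = 1) : Hinv.IsPositive := by
  have hHHinv (u : E) : H (Hinv u) = u := by simpa using congr($hr u)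
  rw [ContinuousLinearMap.isPositive_iff]
  refine ⟨fun u v => ?_, fun u => ?_⟩
  · change ⟪Hinv u, v⟫ = ⟪u, Hinv v⟫
    conv_lhs => rw [← hHHinv v]
    conv_rhs => rw [← hHHinv u]
    exact (hH.isSymmetric _ _).symm
  · have := hH.inner_nonneg_left (Hinv u)
    rwa [hHHinv, real_inner_comm] at this

end InnerProductSpace

/- The square root is taken in the matrix algebra, where the continuous functional calculus
is available over `ℝ`. -/
open scoped MatrixOrder in
theorem ContinuousLinearMap.IsPositive.exists_isSelfAdjoint_mul_self_eq {ι : Type*} [Fintype ι]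
    [DecidableEq ι] {P : EuclideanSpace ℝ ι →L[ℝ] EuclideanSpace ℝ ι} (hP : P.IsPositive) :
    ∃ S, IsSelfAdjoint S ∧ S * S = P := by
  set M := (Matrix.toEuclideanCLM (𝕜 := ℝ) (n := ι)).symm P
  have hM : 0 ≤ M := by
    rw [Matrix.nonneg_iff_posSemidef, ← Matrix.isPositive_toEuclideanLin_iff,
      ← Matrix.coe_toEuclideanCLM_eq_toEuclideanLin, StarAlgEquiv.apply_symm_apply]
    exact hP
  refine ⟨Matrix.toEuclideanCLM (𝕜 := ℝ) (CFC.sqrt M), (CFC.sqrt_nonneg M).isSelfAdjoint.map _, ?_⟩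
  rw [← map_mul, CFC.sqrt_mul_sqrt_self M, StarAlgEquiv.apply_symm_apply]

theorem exists_basis_apply_one_add_inv_mul_eq_smul {d : ℕ}
    {A H Hinv : EuclideanSpace ℝ (Fin d) →L[ℝ] EuclideanSpace ℝ (Fin d)}
    (hH : H.IsPositive) (hHA : (H + A).IsPositive) (hl : Hinv * H = 1) (hr : H * Hinv = 1) :
    ∃ (b : Module.Basis (Fin d) ℝ (EuclideanSpace ℝ (Fin d))) (μ : Fin d → ℝ),
      (∀ i, 0 ≤ μ i) ∧ ∀ i, (1 + Hinv * A) (b i) = μ i • b i := by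
  obtain ⟨S, hSadj, hSS⟩ := (hH.of_mul_eq_one hr).exists_isSelfAdjoint_mul_self_eq
  have hHS : H * S = S * H := left_inv_eq_right_inv (a := S)
    (by rw [mul_assoc, hSS, hr]) (by rw [← mul_assoc, hSS, hl])
  let u : (EuclideanSpace ℝ (Fin d) →L[ℝ] EuclideanSpace ℝ (Fin d))ˣ :=
    ⟨S, H * S, by rw [hHS, ← mul_assoc, hSS, hl], by rw [mul_assoc, hSS, hr]⟩
  have hC : (S * ((H + A) * S)).IsPositive := by
    have := hHA.conj_adjoint S
    rwa [hSadj.adjoint_eq] at this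
  have hn := finrank_euclideanSpace_fin (𝕜 := ℝ) (n := d)
  refine ⟨(hC.isSymmetric.eigenvectorBasis hn).toBasis.map
    (ContinuousLinearEquiv.unitsEquiv ℝ _ u).toLinearEquiv,
    hC.isSymmetric.eigenvalues hn, hC.toLinearMap.nonneg_eigenvalues hn, fun i => ?_⟩
  -- `S = H^{-1/2}`
  have hconj : (1 + Hinv * A) * S = S * (S * ((H + A) * S)) := by
    calc (1 + Hinv * A) * S = (Hinv * H) * S + Hinv * A * S := by rw [hl]; noncomm_ring
      _ = S * (S * ((H + A) * S)) := by rw [← hSS]; noncomm_ring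
  simpa [u] using congr($hconj (hC.isSymmetric.eigenvectorBasis hn i)).trans
    congr(S $(hC.isSymmetric.apply_eigenvectorBasis hn i))

theorem exists_lt_forall_lt_of_lt_top_iff {E : Type*} [NormedAddCommGroup E] [ProperSpace E]
    {g : E → EReal} (hg : Continuous g) {R : ℝ} (hgR : ∀ z, g z < ⊤ ↔ ‖z‖ < R) (M : ℝ) :
    ∃ r < R, ∀ z, r ≤ ‖z‖ → (M : EReal) < g z := by
  obtain ⟨r, hrR, hsub⟩ := exists_lt_subset_ball (isClosed_le hg continuous_const)
    (fun z (hz : g z ≤ M) => mem_ball_zero_iff.mpr ((hgR z).mp (hz.trans_lt (EReal.coe_lt_top M))))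
  refine ⟨r, hrR, fun z hz => not_le.mp fun hle => ?_⟩
  exact (mem_ball_zero_iff.mp (hsub hle)).not_ge hz

section bwTransform

variable {d : ℕ} {R : ℝ} {Lfun φ₁ : EuclideanSpace ℝ (Fin d) → EReal}

theorem sub_le_bwTransform {x y : EuclideanSpace ℝ (Fin d)} (hy : y ∈ ball x R) :
    φ₁ y - Lfun (y - x) ≤ bwTransform R Lfun φ₁ x :=
  le_iSup₂ (f := fun y _ => φ₁ y - Lfun (y - x)) y hy

theorem le_add_of_bwTransform_le {x y : EuclideanSpace ℝ (Fin d)} (hy : y ∈ ball x R) {c : ℝ}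
    (hc : bwTransform R Lfun φ₁ x ≤ c) : φ₁ y ≤ c + Lfun (y - x) := by
  rw [← EReal.sub_le_iff_le_add (.inr (EReal.coe_ne_top c)) (.inr (EReal.coe_ne_bot c))]
  exact (sub_le_bwTransform hy).trans hc

theorem exists_forall_le_of_bwTransform_le (hR : 0 < R) (hLcont : Continuous Lfun)
    (hLfin : ∀ z, Lfun z < ⊤ ↔ ‖z‖ < R) {x : EuclideanSpace ℝ (Fin d)} {B : ℝ}
    (hB : ∀ᶠ x' in 𝓝 x, bwTransform R Lfun φ₁ x' ≤ B) :
    ∃ r₀ < R, ∃ C : ℝ, ∀ y, r₀ ≤ ‖y - x‖ → ‖y - x‖ < R → φ₁ y ≤ C := by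
  obtain ⟨δ, hδ, hBδ⟩ := Metric.eventually_nhds_iff.mp hB
  obtain ⟨ε, hε, hεδ, hεR⟩ : ∃ ε, 0 < ε ∧ ε < δ ∧ ε < R :=
    ⟨min δ R / 2, by positivity, by linarith [min_le_left δ R, lt_min hδ hR],
      by linarith [min_le_right δ R, lt_min hδ hR]⟩
  obtain ⟨z₀, hz₀, hmax⟩ := IsCompact.exists_isMaxOn
    (isCompact_closedBall (0 : EuclideanSpace ℝ (Fin d)) (R - ε))
    (nonempty_closedBall.mpr (by linarith)) hLcont.continuousOn
  have hz₀R : Lfun z₀ ≠ ⊤ :=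
    ((hLfin z₀).mpr ((mem_closedBall_zero_iff.mp hz₀).trans_lt (by linarith))).ne
  refine ⟨ε, hεR, B + (Lfun z₀).toReal, fun y hεy hyR => ?_⟩
  have hy : 0 < ‖y - x‖ := hε.trans_le hεy
  set x' := x + (ε / ‖y - x‖) • (y - x)
  have hx' : ‖x' - x‖ = ε := by
    rw [add_sub_cancel_left, norm_smul, Real.norm_of_nonneg (by positivity),
      div_mul_cancel₀ _ hy.ne']
  have hyx' : ‖y - x'‖ = ‖y - x‖ - ε := by
    rw [show y - x' = (1 - ε / ‖y - x‖) • (y - x) by module, norm_smul,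
      Real.norm_of_nonneg (sub_nonneg.mpr ((div_le_one hy).mpr hεy)), sub_mul, one_mul,
      div_mul_cancel₀ _ hy.ne']
  calc φ₁ y ≤ B + Lfun (y - x') :=
        le_add_of_bwTransform_le (by rw [mem_ball, dist_eq_norm, hyx']; linarith)
          (hBδ (by rwa [dist_eq_norm, hx']))
    _ ≤ B + Lfun z₀ := by gcongr; exact hmax (mem_closedBall_zero_iff.mpr (by linarith))
    _ ≤ ↑(B + (Lfun z₀).toReal) := by rw [EReal.coe_add]; gcongr; exact EReal.le_coe_toReal hz₀R

theorem exists_mem_MsecBT (hR : 0 < R) (hLcont : Continuous Lfun)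
    (hLfin : ∀ z, Lfun z < ⊤ ↔ ‖z‖ < R) {L : EuclideanSpace ℝ (Fin d) → ℝ}
    (hLL : ∀ z ∈ ball (0 : EuclideanSpace ℝ (Fin d)) R, Lfun z = L z)
    (hφ₁ : UpperSemicontinuous φ₁) {x : EuclideanSpace ℝ (Fin d)} {c : ℝ}
    (hc : bwTransform R Lfun φ₁ x = c) {r₀ C : ℝ} (hr₀ : r₀ < R)
    (hC : ∀ y, r₀ ≤ ‖y - x‖ → ‖y - x‖ < R → φ₁ y ≤ C) :
    ∃ y, y ∈ MsecBT Lfun (bwTransform R Lfun φ₁) φ₁ x := by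
  -- outside `K` the objective stays below `c - 1`, so its supremum `c` is attained on `K`
  obtain ⟨r₁, hr₁, hLlarge⟩ := exists_lt_forall_lt_of_lt_top_iff hLcont hLfin (C - c + 1)
  set K := closedBall x (max (max r₀ r₁) 0)
  have hKR : K ⊆ ball x R := closedBall_subset_ball (max_lt (max_lt hr₀ hr₁) hR)
  have hLx : ∀ y ∈ ball x R, Lfun (y - x) = L (y - x) := fun y hy =>
    hLL _ (mem_ball_zero_iff.mpr (mem_ball_iff_norm.mp hy))
  have husc : UpperSemicontinuousOn (fun y => φ₁ y - Lfun (y - x)) K := by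
    change UpperSemicontinuousOn (fun y => φ₁ y + -Lfun (y - x)) K
    refine (hφ₁.upperSemicontinuousOn K).add' ((continuous_neg.comp
      (hLcont.comp (continuous_sub_right x))).upperSemicontinuous.upperSemicontinuousOn K)
      fun y hy => EReal.continuousAt_add (.inr ?_) (.inr ?_) <;>
    simp [hLx y (hKR hy)]
  obtain ⟨y, hyK, hymax⟩ := husc.exists_isMaxOn ⟨x, mem_closedBall_self (le_max_right _ _)⟩
    (isCompact_closedBall _ _)
  have hout : ∀ z ∈ ball x R, z ∉ K → φ₁ z - Lfun (z - x) ≤ (c - 1 : ℝ) := fun z hz hzK => by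
    have hK : max (max r₀ r₁) 0 < ‖z - x‖ := by simpa [K, dist_eq_norm] using hzK
    have hr₀z : r₀ ≤ ‖z - x‖ := (le_max_left _ _).trans ((le_max_left _ _).trans hK.le)
    have hr₁z : r₁ ≤ ‖z - x‖ := (le_max_right _ _).trans ((le_max_left _ _).trans hK.le)
    calc φ₁ z - Lfun (z - x) ≤ C - (C - c + 1 : ℝ) :=
          EReal.sub_le_sub (hC z hr₀z (mem_ball_iff_norm.mp hz)) (hLlarge _ hr₁z).le
      _ = (c - 1 : ℝ) := by norm_cast; ring
  have hyc : φ₁ y - Lfun (y - x) = c := by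
    refine le_antisymm (hc ▸ sub_le_bwTransform (hKR hyK)) (not_lt.mp fun hlt => ?_)
    have : bwTransform R Lfun φ₁ x ≤ max (φ₁ y - Lfun (y - x)) (c - 1 : ℝ) :=
      iSup₂_le fun z hz => if hzK : z ∈ K then le_max_of_le_left (hymax hzK)
        else le_max_of_le_right (hout z hz hzK)
    rw [hc] at this
    exact (lt_irrefl _) (this.trans_lt (max_lt hlt (by exact_mod_cast sub_one_lt c)))
  rw [hLx y (hKR hyK)] at hyc
  have hφ₁y : φ₁ y = (c + L (y - x) : ℝ) := by
    rw [EReal.coe_add, ← hyc, EReal.sub_add_cancel]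
  refine ⟨y, ?_, ?_, ?_, ?_, ?_⟩ <;> simp [hc, hφ₁y, hLx y (hKR hyK), ← EReal.coe_add, add_comm]

theorem isLocalMin_of_mem_MsecBT (hLfin : ∀ z, Lfun z < ⊤ ↔ ‖z‖ < R)
    {L : EuclideanSpace ℝ (Fin d) → ℝ}
    (hLL : ∀ z ∈ ball (0 : EuclideanSpace ℝ (Fin d)) R, Lfun z = L z)
    {x y : EuclideanSpace ℝ (Fin d)} {f : EuclideanSpace ℝ (Fin d) → ℝ} {ρ : ℝ} (hρ : 0 < ρ)
    (hrep : ∀ y ∈ ball x ρ, bwTransform R Lfun φ₁ y = f y)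
    (hy : y ∈ MsecBT Lfun (bwTransform R Lfun φ₁) φ₁ x) :
    ‖y - x‖ < R ∧ IsLocalMin (fun x' => f x' + L (y - x')) x := by
  obtain ⟨h0b, -, -, h1t, heq⟩ := hy
  have hyR : ‖y - x‖ < R := (hLfin _).mp <| lt_top_iff_ne_top.mpr fun htop => h1t <| by
    rw [heq, htop, EReal.top_add_of_ne_bot h0b]
  have hφ₁y : φ₁ y = (L (y - x) + f x : ℝ) := by
    rw [heq, hLL _ (mem_ball_zero_iff.mpr hyR), hrep x (mem_ball_self hρ), EReal.coe_add]
  refine ⟨hyR, ?_⟩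
  filter_upwards [ball_mem_nhds x hρ,
    (isOpen_lt (by fun_prop : Continuous fun x' => ‖y - x'‖) continuous_const).mem_nhds hyR]
    with x' hx'ρ (hx'R : ‖y - x'‖ < R)
  have := le_add_of_bwTransform_le (mem_ball_iff_norm.mpr hx'R) (hrep x' hx'ρ).le
  rw [hφ₁y, hLL _ (mem_ball_zero_iff.mpr hx'R), ← EReal.coe_add, EReal.coe_le_coe_iff] at this
  linarith

theorem exists_MsecBT_eq_singleton (hR : 0 < R) (hLcont : Continuous Lfun)
    (hLfin : ∀ z, Lfun z < ⊤ ↔ ‖z‖ < R) {L : EuclideanSpace ℝ (Fin d) → ℝ}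
    {L' : EuclideanSpace ℝ (Fin d) → EuclideanSpace ℝ (Fin d) →L[ℝ] ℝ}
    {L'' : EuclideanSpace ℝ (Fin d) →
      EuclideanSpace ℝ (Fin d) →L[ℝ] EuclideanSpace ℝ (Fin d) →L[ℝ] ℝ}
    (hLL : ∀ z ∈ ball (0 : EuclideanSpace ℝ (Fin d)) R, Lfun z = L z)
    (hL' : ∀ z ∈ ball 0 R, HasFDerivAt L (L' z) z) (hL'' : ∀ z ∈ ball 0 R, HasFDerivAt L' (L'' z) z)
    (hL''pos : ∀ z ∈ ball 0 R, ∀ u ≠ 0, 0 < L'' z u u) (hφ₁ : UpperSemicontinuous φ₁)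
    {x p : EuclideanSpace ℝ (Fin d)} {f : EuclideanSpace ℝ (Fin d) → ℝ} {ρ : ℝ} (hρ : 0 < ρ)
    (hrep : ∀ y ∈ ball x ρ, bwTransform R Lfun φ₁ y = f y) (hp : HasGradientAt f p x) :
    ∃ T, MsecBT Lfun (bwTransform R Lfun φ₁) φ₁ x = {T} ∧ ‖T - x‖ < R ∧
      HasGradientAt L p (T - x) ∧ IsLocalMin (fun x' => f x' + L (T - x')) x := by
  have hcontact : ∀ y ∈ MsecBT Lfun (bwTransform R Lfun φ₁) φ₁ x, ‖y - x‖ < R ∧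
      HasGradientAt L p (y - x) ∧ IsLocalMin (fun x' => f x' + L (y - x')) x := fun y hy =>
    have ⟨hyR, hmin⟩ := isLocalMin_of_mem_MsecBT hLfin hLL hρ hrep hy
    ⟨hyR, hmin.hasGradientAt_of_add_comp_sub hp
      (hL' _ (mem_ball_zero_iff.mpr hyR)).differentiableAt, hmin⟩
  obtain ⟨r₀, hr₀, C, hC⟩ := exists_forall_le_of_bwTransform_le (B := f x + 1) hR hLcont hLfin <| by
    filter_upwards [ball_mem_nhds x hρ,
      hp.hasFDerivAt.continuousAt.eventually (gt_mem_nhds (lt_add_one (f x)))] with x' hx' hfx'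
    rw [hrep x' hx']
    exact_mod_cast hfx'.le
  obtain ⟨T, hT⟩ := exists_mem_MsecBT hR hLcont hLfin hLL hφ₁ (hrep x (mem_ball_self hρ)) hr₀ hC
  obtain ⟨hTR, hTgrad, hTmin⟩ := hcontact T hT
  refine ⟨T, eq_singleton_iff_unique_mem.mpr ⟨hT, fun y hy => ?_⟩, hTR, hTgrad, hTmin⟩
  obtain ⟨hyR, hygrad, -⟩ := hcontact y hy
  have hy0 : y - x ∈ ball 0 R := mem_ball_zero_iff.mpr hyR
  have hT0 : T - x ∈ ball 0 R := mem_ball_zero_iff.mpr hTR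
  exact sub_left_injective <| (convex_ball 0 R).injOn_of_hasFDerivAt_of_pos hL'' hL''pos hy0 hT0 <|
    ((hL' _ hy0).unique hygrad.hasFDerivAt).trans ((hL' _ hT0).unique hTgrad.hasFDerivAt).symm

end bwTransform

theorem statement_14_general (d : ℕ) (R : ℝ) (hR : 0 < R)
    (Lfun : EuclideanSpace ℝ (Fin d) → EReal)
    (hLcont : Continuous Lfun)
    (hLfin : ∀ z, Lfun z < ⊤ ↔ ‖z‖ < R)
    (L : EuclideanSpace ℝ (Fin d) → ℝ)
    (hLL : ∀ z ∈ Metric.ball (0 : EuclideanSpace ℝ (Fin d)) R, Lfun z = ((L z : ℝ) : EReal))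
    (hLC2 : ContDiffOn ℝ 2 L (Metric.ball 0 R))
    (lamStar : ℝ) (hlam : 0 < lamStar)
    (hLconv : ∀ z ∈ Metric.ball (0 : EuclideanSpace ℝ (Fin d)) R,
      ∀ v : EuclideanSpace ℝ (Fin d),
        lamStar * ‖v‖ ^ 2 ≤ fderiv ℝ (fderiv ℝ L) z v v)
    (φ₁ : EuclideanSpace ℝ (Fin d) → EReal)
    (hφ₁ : UpperSemicontinuous φ₁)
    (φ₀ : EuclideanSpace ℝ (Fin d) → EReal)
    (hφ₀ : φ₀ = bwTransform R Lfun φ₁)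
    (x : EuclideanSpace ℝ (Fin d))
    (f : EuclideanSpace ℝ (Fin d) → ℝ) (ρ : ℝ) (hρ : 0 < ρ)
    (hrep : ∀ y ∈ Metric.ball x ρ, φ₀ y = ((f y : ℝ) : EReal))
    (p : EuclideanSpace ℝ (Fin d)) (hp : HasGradientAt f p x) :
    ∃ Tx : EuclideanSpace ℝ (Fin d),
      MsecBT Lfun φ₀ φ₁ x = {Tx} ∧
      ‖x - Tx‖ < R ∧
      HasGradientAt L p (Tx - x) ∧
      ∀ A : EuclideanSpace ℝ (Fin d) →L[ℝ] EuclideanSpace ℝ (Fin d),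
        (∀ u v : EuclideanSpace ℝ (Fin d), ⟪A u, v⟫ = ⟪u, A v⟫) →
        (∀ ε > (0 : ℝ), ∃ δ > (0 : ℝ), ∀ y : EuclideanSpace ℝ (Fin d), ‖y - x‖ < δ →
          |f y - f x - ⟪p, y - x⟫ - 1 / 2 * ⟪A (y - x), y - x⟫| ≤ ε * ‖y - x‖ ^ 2) →
        (∀ v : EuclideanSpace ℝ (Fin d),
          0 ≤ ⟪A v, v⟫ + fderiv ℝ (fderiv ℝ L) (Tx - x) v v) ∧
        ∀ HL HLinv : EuclideanSpace ℝ (Fin d) →L[ℝ] EuclideanSpace ℝ (Fin d),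
          (∀ v w : EuclideanSpace ℝ (Fin d),
            ⟪HL v, w⟫ = fderiv ℝ (fderiv ℝ L) (Tx - x) v w) →
          HLinv.comp HL = ContinuousLinearMap.id ℝ (EuclideanSpace ℝ (Fin d)) →
          HL.comp HLinv = ContinuousLinearMap.id ℝ (EuclideanSpace ℝ (Fin d)) →
          ∃ (b : Module.Basis (Fin d) ℝ (EuclideanSpace ℝ (Fin d))) (μ : Fin d → ℝ),
            (∀ i, 0 ≤ μ i) ∧
            ∀ i, (ContinuousLinearMap.id ℝ (EuclideanSpace ℝ (Fin d)) +
                HLinv.comp A) (b i) = μ i • b i := by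
  subst hφ₀
  have hL' : ∀ z ∈ ball 0 R, HasFDerivAt L (fderiv ℝ L z) z := fun z hz =>
    (hLC2.differentiableOn (by norm_num)).hasFDerivAt (isOpen_ball.mem_nhds hz)
  have hL'' : ∀ z ∈ ball 0 R, HasFDerivAt (fderiv ℝ L) (fderiv ℝ (fderiv ℝ L) z) z := fun z hz =>
    ((hLC2.fderiv_of_isOpen isOpen_ball (by norm_num : (1 : WithTop ℕ∞) + 1 ≤ 2)).differentiableOn
      one_ne_zero).hasFDerivAt (isOpen_ball.mem_nhds hz)
  obtain ⟨T, hMT, hTR, hTgrad, hTmin⟩ := exists_MsecBT_eq_singleton hR hLcont hLfin hLL hL' hL''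
    (fun z hz u hu => (by positivity : 0 < lamStar * ‖u‖ ^ 2).trans_le (hLconv z hz u))
    hφ₁ hρ hrep hp
  have hT0 : T - x ∈ ball 0 R := mem_ball_zero_iff.mpr hTR
  refine ⟨T, hMT, by rwa [norm_sub_rev], hTgrad, fun A hAsymm hAlex => ?_⟩
  have hf_expand : (fun y => f y - f x - ⟪p, y - x⟫ - 1 / 2 * ⟪A (y - x), y - x⟫) =o[𝓝 x]
      fun y => ‖y - x‖ ^ 2 := isLittleO_iff.2 fun ε hε =>
    have ⟨δ, hδ, hfδ⟩ := hAlex ε hε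
    Metric.eventually_nhds_iff.2 ⟨δ, hδ, fun y hy => by simpa using hfδ y (by rwa [← dist_eq_norm])⟩
  have hHess : ∀ v, 0 ≤ ⟪A v, v⟫ + fderiv ℝ (fderiv ℝ L) (T - x) v v :=
    hessian_add_nonneg_of_isLocalMin isOpen_ball (convex_ball 0 R) hL' hT0 (hL'' _ hT0)
      (fun v => by rw [hTgrad.hasFDerivAt.fderiv]; rfl) hf_expand hTmin
  have hsymm : ∀ v w, fderiv ℝ (fderiv ℝ L) (T - x) v w = fderiv ℝ (fderiv ℝ L) (T - x) w v :=
    second_derivative_symmetric_of_eventually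
      (eventually_of_mem (isOpen_ball.mem_nhds hT0) hL') (hL'' _ hT0)
  refine ⟨hHess, fun HL HLinv hHL hl hr => exists_basis_apply_one_add_inv_mul_eq_smul ?_ ?_ hl hr⟩
  · exact ContinuousLinearMap.isPositive_of_inner_eq hHL hsymm fun v =>
      (by positivity : 0 ≤ lamStar * ‖v‖ ^ 2).trans (hLconv _ hT0 v)
  · refine ContinuousLinearMap.isPositive_of_inner_eq
      (Q := fun v w => fderiv ℝ (fderiv ℝ L) (T - x) v w + ⟪A v, w⟫)
      (fun v w => by rw [add_apply, inner_add_left, hHL]) (fun v w => ?_)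
      fun v => by linarith [hHess v]
    rw [hsymm, hAsymm, real_inner_comm]

theorem statement_14 (d : ℕ) (hd : 1 ≤ d) (R : ℝ) (hR : 0 < R)
    (Lfun : EuclideanSpace ℝ (Fin d) → EReal)
    (hLcont : Continuous Lfun)
    (hLnonneg : ∀ z, 0 ≤ Lfun z)
    (hL0 : Lfun 0 = 0)
    (hLfin : ∀ z, Lfun z < ⊤ ↔ ‖z‖ < R)
    (L : EuclideanSpace ℝ (Fin d) → ℝ)
    (hLL : ∀ z ∈ Metric.ball (0 : EuclideanSpace ℝ (Fin d)) R, Lfun z = ((L z : ℝ) : EReal))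
    (hLC2 : ContDiffOn ℝ 2 L (Metric.ball 0 R))
    (lamStar : ℝ) (hlam : 0 < lamStar)
    (hLconv : ∀ z ∈ Metric.ball (0 : EuclideanSpace ℝ (Fin d)) R,
      ∀ v : EuclideanSpace ℝ (Fin d),
        lamStar * ‖v‖ ^ 2 ≤ fderiv ℝ (fderiv ℝ L) z v v)
    (φ₁ : EuclideanSpace ℝ (Fin d) → EReal)
    (hφ₁ : UpperSemicontinuous φ₁)
    (φ₀ : EuclideanSpace ℝ (Fin d) → EReal)
    (hφ₀ : φ₀ = bwTransform R Lfun φ₁)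
    (x : EuclideanSpace ℝ (Fin d))
    (hx : x ∈ {x | ⊥ < φ₀ x} ∩ interior {x | φ₀ x < ⊤})
    (f : EuclideanSpace ℝ (Fin d) → ℝ) (ρ : ℝ) (hρ : 0 < ρ)
    (hrep : ∀ y ∈ Metric.ball x ρ, φ₀ y = ((f y : ℝ) : EReal))
    (p : EuclideanSpace ℝ (Fin d)) (hp : HasGradientAt f p x) :
    ∃ Tx : EuclideanSpace ℝ (Fin d),
      MsecBT Lfun φ₀ φ₁ x = {Tx} ∧
      ‖x - Tx‖ < R ∧
      HasGradientAt L p (Tx - x) ∧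
      ∀ A : EuclideanSpace ℝ (Fin d) →L[ℝ] EuclideanSpace ℝ (Fin d),
        (∀ u v : EuclideanSpace ℝ (Fin d), ⟪A u, v⟫ = ⟪u, A v⟫) →
        (∀ ε > (0 : ℝ), ∃ δ > (0 : ℝ), ∀ y : EuclideanSpace ℝ (Fin d), ‖y - x‖ < δ →
          |f y - f x - ⟪p, y - x⟫ - 1 / 2 * ⟪A (y - x), y - x⟫| ≤ ε * ‖y - x‖ ^ 2) →
        (∀ v : EuclideanSpace ℝ (Fin d),
          0 ≤ ⟪A v, v⟫ + fderiv ℝ (fderiv ℝ L) (Tx - x) v v) ∧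
        ∀ HL HLinv : EuclideanSpace ℝ (Fin d) →L[ℝ] EuclideanSpace ℝ (Fin d),
          (∀ v w : EuclideanSpace ℝ (Fin d),
            ⟪HL v, w⟫ = fderiv ℝ (fderiv ℝ L) (Tx - x) v w) →
          HLinv.comp HL = ContinuousLinearMap.id ℝ (EuclideanSpace ℝ (Fin d)) →
          HL.comp HLinv = ContinuousLinearMap.id ℝ (EuclideanSpace ℝ (Fin d)) →
          ∃ (b : Module.Basis (Fin d) ℝ (EuclideanSpace ℝ (Fin d))) (μ : Fin d → ℝ),
            (∀ i, 0 ≤ μ i) ∧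
            ∀ i, (ContinuousLinearMap.id ℝ (EuclideanSpace ℝ (Fin d)) +
                HLinv.comp A) (b i) = μ i • b i :=
  statement_14_general d R hR Lfun hLcont hLfin L hLL hLC2 lamStar hlam hLconv φ₁ hφ₁ φ₀ hφ₀ x f ρ
    hρ hrep p hp
end
end
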